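/- arXiv:2602.23811 — 4 statements merged into one kernel-verified Lean document; each statement's English description precedes it below -/
import Mathlib

section
/- Let Z be a bounded (or integrable) real random variable on a probability space and α ∈ (0,1]. Then sup over measurable weights w with 0 ≤ w ≤ 1/α and E[w] = 1 of E[w·Z] equals min over τ ∈ ℝ of { τ + (1/α)·E[(Z − τ)₊] }, i.e., the CVaR at level 1−α of Z. -/
/-!
For `0 ≤ w ≤ 1/α` one has pointwise `w z ≤ τ w + (1/α) (z - τ)₊`, so
`E[w Z] ≤ τ + (1/α) E[(Z - τ)₊]` whenever `E[w] = 1`. Equality holds as soon as `w = 1/α` on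
`{Z > τ}` and `w = 0` on `{Z < τ}`. At an upper `α`-quantile `τ` of `Z`, i.e.
`P(Z > τ) ≤ α ≤ P(Z ≥ τ)`, such a `w` with `E[w] = 1` exists by splitting the mass of the atom
`{Z = τ}`. So the supremum is attained and equals the minimum.
-/

open MeasureTheory Set Filter Topology

lemma mul_le_mul_add_mul_max_sub {w c z τ : ℝ} (hw : 0 ≤ w) (hwc : w ≤ c) :
    w * z ≤ τ * w + c * max (z - τ) 0 := by
  have h₁ : w * (z - τ) ≤ w * max (z - τ) 0 := mul_le_mul_of_nonneg_left (le_max_left _ _) hw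
  have h₂ : w * max (z - τ) 0 ≤ c * max (z - τ) 0 :=
    mul_le_mul_of_nonneg_right hwc (le_max_right _ _)
  linarith

lemma mul_eq_mul_add_mul_max_sub_of_slackness {w c z τ : ℝ} (hgt : τ < z → w = c)
    (hlt : z < τ → w = 0) :
    w * z = τ * w + c * max (z - τ) 0 := by
  rcases lt_trichotomy τ z with h | rfl | h
  · rw [hgt h, max_eq_left (sub_nonneg.2 h.le)]; ring
  · simp [mul_comm]
  · rw [hlt h, max_eq_right (sub_nonpos.2 h.le)]; ring

namespace MeasureTheory

section Quantile

variable {μ : Measure ℝ} {α : ENNReal} {τ : ℝ}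

lemma measure_Ioi_le_of_forall_gt (h : ∀ t > τ, μ (Ici t) ≤ α) : μ (Ioi τ) ≤ α := by
  obtain ⟨u, hu_anti, hu_gt, hu_lim⟩ := exists_seq_strictAnti_tendsto τ
  have hmono : Monotone fun n => Ici (u n) := fun _ _ hmn =>
    Ici_subset_Ici.2 (hu_anti.antitone hmn)
  rw [← iUnion_Ici_eq_Ioi_of_lt_of_tendsto hu_gt hu_lim, hmono.measure_iUnion]
  exact iSup_le fun n => h _ (hu_gt n)

lemma le_measure_Ici_of_forall_lt [IsFiniteMeasure μ] (h : ∀ t < τ, α ≤ μ (Ici t)) :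
    α ≤ μ (Ici τ) := by
  obtain ⟨u, hu_mono, hu_lt, hu_lim⟩ := exists_seq_strictMono_tendsto τ
  have hIci : ⋂ n, Ici (u n) = Ici τ := by
    ext x
    simp only [mem_iInter, mem_Ici]
    exact ⟨fun hx => le_of_tendsto' hu_lim hx, fun hx n => (hu_lt n).le.trans hx⟩
  have hanti : Antitone fun n => Ici (u n) := fun _ _ hmn =>
    Ici_subset_Ici.2 (hu_mono.monotone hmn)
  rw [← hIci, hanti.measure_iInter
    (fun _ => measurableSet_Ici.nullMeasurableSet) ⟨0, measure_ne_top _ _⟩]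
  exact le_iInf fun n => h _ (hu_lt n)

lemma tendsto_measure_Ici_atTop_zero [IsFiniteMeasure μ] :
    Tendsto (fun t => μ (Ici t)) atTop (𝓝 0) := by
  have hempty : ⋂ t : ℝ, Ici t = ∅ :=
    iInter_eq_empty_iff.2 fun x => ⟨x + 1, by simp⟩
  simpa [hempty, Function.comp_def] using tendsto_measure_iInter_atTop (μ := μ)
    (fun _ => measurableSet_Ici.nullMeasurableSet) antitone_Ici ⟨0, measure_ne_top _ _⟩

lemma exists_measure_Ioi_le_le_measure_Ici [IsFiniteMeasure μ] (hα : 0 < α)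
    (hS : ∃ t, α ≤ μ (Ici t)) : ∃ τ, μ (Ioi τ) ≤ α ∧ α ≤ μ (Ici τ) := by
  set S := {t | α ≤ μ (Ici t)}
  obtain ⟨T, hT⟩ := eventually_atTop.1 ((tendsto_measure_Ici_atTop_zero (μ := μ)).eventually
    (gt_mem_nhds hα))
  have hS_bdd : BddAbove S := ⟨T, fun t ht => by
    by_contra! hTt
    exact (hT t hTt.le).not_ge ht⟩
  refine ⟨sSup S, measure_Ioi_le_of_forall_gt fun t ht => ?_,
    le_measure_Ici_of_forall_lt fun t ht => ?_⟩
  · exact (not_le.1 fun hα_le => (le_csSup hS_bdd hα_le).not_gt ht).le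
  · obtain ⟨s, hs, hts⟩ := exists_lt_of_lt_csSup hS ht
    exact (show α ≤ μ (Ici s) from hs).trans (measure_mono (Ici_subset_Ici.2 hts.le))

end Quantile

section Weights

variable {Ω : Type*} [MeasurableSpace Ω] {P : Measure Ω} [IsFiniteMeasure P] {Z w : Ω → ℝ}
  {c τ : ℝ}

lemma integral_mul_add_mul_max_sub (hZ : Integrable Z P) (hw : Integrable w P) :
    ∫ ω, (τ * w ω + c * max (Z ω - τ) 0) ∂P =
      τ * ∫ ω, w ω ∂P + c * ∫ ω, max (Z ω - τ) 0 ∂P := by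
  have hpos : Integrable (fun ω => max (Z ω - τ) 0) P := (hZ.sub (integrable_const τ)).pos_part
  rw [integral_add (hw.const_mul τ) (hpos.const_mul c), integral_const_mul, integral_const_mul]

lemma integral_mul_le_of_nonneg_of_le (hZ : Integrable Z P) (hw : Measurable w)
    (hw0 : ∀ ω, 0 ≤ w ω) (hwc : ∀ ω, w ω ≤ c) :
    ∫ ω, w ω * Z ω ∂P ≤ τ * ∫ ω, w ω ∂P + c * ∫ ω, max (Z ω - τ) 0 ∂P := by
  have hw_bdd : ∀ᵐ ω ∂P, ‖w ω‖ ≤ c := ae_of_all _ fun ω => by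
    rw [Real.norm_of_nonneg (hw0 ω)]; exact hwc ω
  have hw_int : Integrable w P := .of_bound hw.aestronglyMeasurable c hw_bdd
  rw [← integral_mul_add_mul_max_sub hZ hw_int]
  exact integral_mono (hZ.bdd_mul hw.aestronglyMeasurable hw_bdd)
    ((hw_int.const_mul τ).add ((hZ.sub (integrable_const τ)).pos_part.const_mul c))
    fun ω => mul_le_mul_add_mul_max_sub (hw0 ω) (hwc ω)

lemma integral_mul_eq_of_slackness (hZ : Integrable Z P) (hw : Integrable w P)
    (hgt : ∀ ω, τ < Z ω → w ω = c) (hlt : ∀ ω, Z ω < τ → w ω = 0) :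
    ∫ ω, w ω * Z ω ∂P = τ * ∫ ω, w ω ∂P + c * ∫ ω, max (Z ω - τ) 0 ∂P := by
  rw [← integral_mul_add_mul_max_sub hZ hw]
  exact integral_congr_ae
    (ae_of_all _ fun ω => mul_eq_mul_add_mul_max_sub_of_slackness (hgt ω) (hlt ω))

lemma exists_weight_integral_mul_eq (hZm : Measurable Z) (hZ : Integrable Z P) {α : ℝ}
    (hα : 0 < α) (hlt : P.real {ω | τ < Z ω} ≤ α) (hle : α ≤ P.real {ω | τ ≤ Z ω}) :
    ∃ w : Ω → ℝ, Measurable w ∧ (∀ ω, 0 ≤ w ω ∧ w ω ≤ 1 / α) ∧ ∫ ω, w ω ∂P = 1 ∧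
      ∫ ω, w ω * Z ω ∂P = τ + 1 / α * ∫ ω, max (Z ω - τ) 0 ∂P := by
  set A := {ω | τ < Z ω}
  set A' := {ω | τ ≤ Z ω}
  have hA : MeasurableSet A := measurableSet_lt measurable_const hZm
  have hA' : MeasurableSet A' := measurableSet_le measurable_const hZm
  obtain ⟨a, b, ha, hb, hab, habα⟩ : α ∈ segment ℝ (P.real A) (P.real A') := by
    rw [segment_eq_Icc (hlt.trans hle)]; exact ⟨hlt, hle⟩
  -- `w` mixes the weights `(1/α) 1_A` and `(1/α) 1_A'`, whose means bracket `1`.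
  set w : Ω → ℝ := A.indicator (fun _ => a / α) + A'.indicator (fun _ => b / α)
  have hw_apply : ∀ ω, w ω = (if τ < Z ω then a / α else 0) + (if τ ≤ Z ω then b / α else 0) :=
    fun ω => by simp [w, A, A', indicator_apply]
  have hw_int : Integrable w P :=
    ((integrable_const _).indicator hA).add ((integrable_const _).indicator hA')
  have hw1 : ∫ ω, w ω ∂P = 1 := by
    rw [integral_add' ((integrable_const _).indicator hA) ((integrable_const _).indicator hA'),
      integral_indicator_const _ hA, integral_indicator_const _ hA', ← div_self hα.ne', ← habα]
    simp only [smul_eq_mul]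
    ring
  refine ⟨w, (measurable_const.indicator hA).add (measurable_const.indicator hA'),
    fun ω => ?_, hw1, ?_⟩
  · rw [hw_apply, ← hab, add_div]
    split_ifs <;> constructor <;>
      first | positivity | linarith [div_nonneg ha hα.le, div_nonneg hb hα.le]
  · rw [integral_mul_eq_of_slackness hZ hw_int (c := 1 / α)
      (fun ω h => by rw [hw_apply, if_pos h, if_pos h.le, ← add_div, hab])
      (fun ω h => by rw [hw_apply, if_neg h.not_gt, if_neg h.not_ge, add_zero]), hw1, mul_one]

end Weights

end MeasureTheory

/-- Rockafellar–Uryasev dual representation of CVaR: the supremum of `E[w Z]` over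
measurable weights `0 ≤ w ≤ 1/α` with `E[w] = 1` equals the minimum over `τ` of
`τ + (1/α) E[(Z - τ)₊]`, and the minimum is attained. -/
theorem cvar_dual
    {Ω : Type*} [MeasurableSpace Ω] (P : Measure Ω) [IsProbabilityMeasure P]
    (Z : Ω → ℝ) (hZm : Measurable Z) (B : ℝ) (hZb : ∀ ω, |Z ω| ≤ B)
    (α : ℝ) (hα : α ∈ Set.Ioc (0:ℝ) 1) :
    IsLeast
      {v : ℝ | ∃ τ : ℝ, v = τ + (1 / α) * ∫ ω, max (Z ω - τ) 0 ∂P}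
      (sSup {r : ℝ | ∃ w : Ω → ℝ, Measurable w ∧ (∀ ω, 0 ≤ w ω ∧ w ω ≤ 1 / α) ∧
        (∫ ω, w ω ∂P) = 1 ∧ r = ∫ ω, w ω * Z ω ∂P}) := by
  obtain ⟨hα0, hα1⟩ := hα
  have hZ : Integrable Z P := .of_bound hZm.aestronglyMeasurable B
    (ae_of_all _ fun ω => (Real.norm_eq_abs _).trans_le (hZb ω))
  set R := {r : ℝ | ∃ w : Ω → ℝ, Measurable w ∧ (∀ ω, 0 ≤ w ω ∧ w ω ≤ 1 / α) ∧
    (∫ ω, w ω ∂P) = 1 ∧ r = ∫ ω, w ω * Z ω ∂P}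
  have hweak : ∀ r ∈ R, ∀ τ : ℝ, r ≤ τ + (1 / α) * ∫ ω, max (Z ω - τ) 0 ∂P := by
    rintro _ ⟨w, hwm, hwb, hw1, rfl⟩ τ
    simpa [hw1] using integral_mul_le_of_nonneg_of_le (τ := τ) hZ hwm (fun ω => (hwb ω).1)
      fun ω => (hwb ω).2
  have hmap : ∀ s, MeasurableSet s → P.map Z s = P (Z ⁻¹' s) := fun _ => Measure.map_apply hZm
  have hZ_ge : Z ⁻¹' Ici (-B) = univ := eq_univ_of_forall fun ω => neg_le_of_abs_le (hZb ω)
  obtain ⟨τ, hτ_gt, hτ_ge⟩ := exists_measure_Ioi_le_le_measure_Ici (μ := P.map Z)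
    (ENNReal.ofReal_pos.2 hα0)
    ⟨-B, by rw [hmap _ measurableSet_Ici, hZ_ge, measure_univ]; exact ENNReal.ofReal_le_one.2 hα1⟩
  rw [hmap _ measurableSet_Ioi] at hτ_gt
  rw [hmap _ measurableSet_Ici] at hτ_ge
  obtain ⟨w, hwm, hwb, hw1, hwZ⟩ := exists_weight_integral_mul_eq hZm hZ hα0
    (ENNReal.toReal_le_of_le_ofReal hα0.le hτ_gt)
    ((ENNReal.ofReal_le_iff_le_toReal (measure_ne_top _ _)).1 hτ_ge)
  have hτR : τ + (1 / α) * ∫ ω, max (Z ω - τ) 0 ∂P ∈ R := ⟨w, hwm, hwb, hw1, hwZ.symm⟩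
  rw [IsGreatest.csSup_eq ⟨hτR, fun r hr => hweak r hr τ⟩]
  exact ⟨⟨τ, rfl⟩, by rintro _ ⟨τ', rfl⟩; exact hweak _ hτR τ'⟩
end

section
/- Let π_θ be the canonical softmax policy over a finite action set 𝒜 with parameter θ ∈ ℝ^{𝒮×𝒜}: π_θ(a|s) = exp(θ(s,a)) / Σ_{a'} exp(θ(s,a')). Fix θ_k and a function A: 𝒮×𝒜 → ℝ satisfying Σ_a π_{θ_k}(a|s)·A(s,a) = 0 for every s. Then there exists v ∈ ℝ^{𝒮×𝒜} such that A(s,a) = v^⊤ ∇_θ log π_{θ_k}(a|s) for all (s,a); moreover E_{a∼π_{θ_k}(·|s)}[∇_θ log π_{θ_k}(a|s)] = 0 for every s. -/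
open Finset

/-- Canonical (tabular) softmax policy. -/
noncomputable def softmaxPolicy {S A : Type*} [Fintype A] (θ : S × A → ℝ)
    (s : S) (a : A) : ℝ :=
  Real.exp (θ (s, a)) / ∑ a' : A, Real.exp (θ (s, a'))

/-- Tabular score function: `∇_θ log π_θ(a|s) = e_{(s,a)} − Σ_{a'} π_θ(a'|s) e_{(s,a')}`. -/
noncomputable def softmaxScore {S A : Type*} [Fintype A] [DecidableEq S] [DecidableEq A]
    (θ : S × A → ℝ) (s : S) (a : A) : S × A → ℝ :=
  fun p => (if p = (s, a) then 1 else 0)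
    - ∑ a' : A, softmaxPolicy θ s a' * (if p = (s, a') then 1 else 0)

lemma softmaxPolicy_sum {S A : Type*} [Fintype A] [Nonempty A] (θ : S × A → ℝ) (s : S) :
    ∑ a : A, softmaxPolicy θ s a = 1 := by
  have hpos : 0 < ∑ a' : A, Real.exp (θ (s, a')) :=
    Finset.sum_pos (fun a _ => Real.exp_pos _) Finset.univ_nonempty
  simp only [softmaxPolicy, div_eq_mul_inv, ← Finset.sum_mul]
  field_simp

lemma score_dot {S A : Type*} [Fintype S] [Fintype A] [DecidableEq S] [DecidableEq A]
    (θ : S × A → ℝ) (f : S × A → ℝ) (s : S) (a : A) :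
    ∑ p : S × A, f p * softmaxScore θ s a p
      = f (s, a) - ∑ a' : A, softmaxPolicy θ s a' * f (s, a') := by
  simp only [softmaxScore, mul_sub, Finset.sum_sub_distrib, Finset.mul_sum]
  congr 1
  · simp [mul_ite]
  · rw [Finset.sum_comm]
    congr 1
    ext a'
    simp [mul_ite, mul_comm]

/-- With tabular softmax parameterization, any function `Adv` with
`Σ_a π(a|s) Adv(s,a) = 0` for each `s` is exactly expressible as `v^⊤ ∇_θ log π_θ(a|s)`,
and the score has zero mean under the policy. -/
theorem softmax_zero_cfa_error {S A : Type*} [Fintype S] [Fintype A]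
    [DecidableEq S] [DecidableEq A]
    (θ : S × A → ℝ) (Adv : S × A → ℝ)
    (hAdv : ∀ s : S, ∑ a : A, softmaxPolicy θ s a * Adv (s, a) = 0) :
    (∃ v : S × A → ℝ, ∀ (s : S) (a : A),
      Adv (s, a) = ∑ p : S × A, v p * softmaxScore θ s a p) ∧
    (∀ s : S, ∑ a : A, softmaxPolicy θ s a • softmaxScore θ s a = 0) := by
  constructor
  · refine ⟨Adv, fun s a => ?_⟩
    rw [score_dot, hAdv s, sub_zero]
  · intro s
    cases isEmpty_or_nonempty A with
    | inl h => simp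
    | inr h =>
      funext p
      simp only [Finset.sum_apply, Pi.smul_apply, softmaxScore, smul_eq_mul, mul_sub,
        Finset.sum_sub_distrib, Pi.zero_apply]
      rw [← Finset.sum_mul, softmaxPolicy_sum θ s, one_mul, sub_self]
end

section
/- Let μ be a probability measure on a state space 𝒮, let π, π' be Markov kernels from 𝒮 to a finite action set 𝒜, and f: 𝒮×𝒜 → [0, V]. Then E_{s∼μ}[Σ_a f(s,a)·(π'(a|s) − π(a|s))] ≤ V · sqrt( (1/2) · E_{s∼μ}[ KL(π'(·|s) ‖ π(·|s)) ] ). -/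
/-!
Pointwise in `s`, center `f` at `V / 2`: since `π'(·|s) - π(·|s)` sums to zero, Hölder gives the
bound `(V / 2) ‖π'(·|s) - π(·|s)‖₁`, and Pinsker turns it into `V √(KL / 2)`. Pinsker itself
follows from `klFun x ≥ 3 (x - 1)² / (2 (x + 2))` and Cauchy–Schwarz with weights `π' + 2π`.
Integrating, Jensen for the concave square root moves the expectation inside.
-/

open MeasureTheory Finset

section

open Real Set InformationTheory

noncomputable def pinskerGap (x : ℝ) : ℝ := klFun x - 3 * (x - 1) ^ 2 / (2 * (x + 2))

noncomputable def pinskerGapDeriv (x : ℝ) : ℝ := log x - 3 * (x - 1) * (x + 5) / (2 * (x + 2) ^ 2)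

lemma hasDerivAt_pinskerGap {x : ℝ} (hx : 0 < x) :
    HasDerivAt pinskerGap (pinskerGapDeriv x) x := by
  have hq : HasDerivAt (fun x : ℝ ↦ 3 * (x - 1) ^ 2 / (2 * (x + 2)))
      (3 * (x - 1) * (x + 5) / (2 * (x + 2) ^ 2)) x := by
    refine (((((hasDerivAt_id' x).sub_const 1).fun_pow 2).const_mul 3).div
      (((hasDerivAt_id' x).add_const 2).const_mul 2) (by positivity)).congr_deriv ?_
    field_simp
    ring
  exact (hasDerivAt_klFun hx.ne').sub hq

lemma hasDerivAt_pinskerGapDeriv {x : ℝ} (hx : 0 < x) :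
    HasDerivAt pinskerGapDeriv (x⁻¹ - 27 / (x + 2) ^ 3) x := by
  have hq : HasDerivAt (fun x : ℝ ↦ 3 * (x - 1) * (x + 5) / (2 * (x + 2) ^ 2))
      (27 / (x + 2) ^ 3) x := by
    refine ((((hasDerivAt_id' x).sub_const 1).const_mul 3).fun_mul
      ((hasDerivAt_id' x).add_const 5)).div
      ((((hasDerivAt_id' x).add_const 2).fun_pow 2).const_mul 2) (by positivity) |>.congr_deriv ?_
    field_simp
    ring
  exact (hasDerivAt_log hx.ne').sub hq

lemma monotoneOn_pinskerGapDeriv : MonotoneOn pinskerGapDeriv (Ioi 0) := by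
  refine monotoneOn_of_hasDerivWithinAt_nonneg (convex_Ioi 0)
    (fun x hx ↦ (hasDerivAt_pinskerGapDeriv hx).continuousAt.continuousWithinAt)
    (fun x hx ↦ (hasDerivAt_pinskerGapDeriv (interior_subset hx)).hasDerivWithinAt) ?_
  intro x hx
  rw [interior_Ioi] at hx
  have hx : (0 : ℝ) < x := hx
  -- `(x + 2)³ - 27 x = (x - 1)² (x + 8)`
  have hcube : 27 * x ≤ (x + 2) ^ 3 := by
    nlinarith [mul_nonneg (sq_nonneg (x - 1)) (by linarith : (0 : ℝ) ≤ x + 8)]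
  rw [sub_nonneg, div_le_iff₀ (by positivity), inv_mul_eq_div, le_div_iff₀ hx]
  linarith

lemma pinskerGapDeriv_one : pinskerGapDeriv 1 = 0 := by norm_num [pinskerGapDeriv]

lemma continuousOn_pinskerGap : ContinuousOn pinskerGap (Ici 0) := by
  refine continuous_klFun.continuousOn.sub (ContinuousOn.div (by fun_prop) (by fun_prop) ?_)
  intro x hx
  have : (0:ℝ) ≤ x := hx
  positivity

lemma pinskerGap_nonneg {x : ℝ} (hx : 0 ≤ x) : 0 ≤ pinskerGap x := by
  have hgap_one : pinskerGap 1 = 0 := by norm_num [pinskerGap, klFun_one]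
  rcases le_total x 1 with hx1 | hx1
  · have : AntitoneOn pinskerGap (Icc 0 1) := by
      refine antitoneOn_of_hasDerivWithinAt_nonpos (f' := pinskerGapDeriv) (convex_Icc 0 1)
        (continuousOn_pinskerGap.mono Icc_subset_Ici_self) (fun y hy ↦ ?_) (fun y hy ↦ ?_)
      all_goals rw [interior_Icc] at hy
      · exact (hasDerivAt_pinskerGap hy.1).hasDerivWithinAt
      · rw [← pinskerGapDeriv_one]
        exact monotoneOn_pinskerGapDeriv hy.1 (mem_Ioi.2 one_pos) hy.2.le
    simpa [hgap_one] using this ⟨hx, hx1⟩ ⟨zero_le_one, le_rfl⟩ hx1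
  · have : MonotoneOn pinskerGap (Ici 1) := by
      refine monotoneOn_of_hasDerivWithinAt_nonneg (f' := pinskerGapDeriv) (convex_Ici 1)
        (continuousOn_pinskerGap.mono (Ici_subset_Ici.2 zero_le_one))
        (fun y hy ↦ ?_) (fun y hy ↦ ?_)
      all_goals rw [interior_Ici] at hy
      · exact (hasDerivAt_pinskerGap (one_pos.trans hy)).hasDerivWithinAt
      · rw [← pinskerGapDeriv_one]
        exact monotoneOn_pinskerGapDeriv (mem_Ioi.2 one_pos) (mem_Ioi.2 (one_pos.trans hy)) hy.le
    simpa [hgap_one] using this self_mem_Ici hx1 hx1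

lemma mul_klFun_div (p : ℝ) {q : ℝ} (hq : q ≠ 0) :
    q * klFun (p / q) = p * log (p / q) + q - p := by
  rw [klFun_apply]
  field_simp

lemma sq_sub_div_le_mul_klFun_div {p q : ℝ} (hp : 0 ≤ p) (hq : 0 < q) :
    (p - q) ^ 2 / (p + 2 * q) ≤ 2 / 3 * (q * klFun (p / q)) := by
  have hgap := pinskerGap_nonneg (div_nonneg hp hq.le)
  rw [pinskerGap, sub_nonneg] at hgap
  have hscale : (p - q) ^ 2 / (p + 2 * q)
      = 2 / 3 * (q * (3 * (p / q - 1) ^ 2 / (2 * (p / q + 2)))) := by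
    field_simp
  rw [hscale]
  gcongr

theorem sq_sum_abs_sub_le_two_mul_sum_mul_log {A : Type*} [Fintype A] {p q : A → ℝ}
    (hp : ∀ a, 0 ≤ p a) (hq : ∀ a, 0 < q a) (hp_sum : ∑ a, p a = 1) (hq_sum : ∑ a, q a = 1) :
    (∑ a, |p a - q a|) ^ 2 ≤ 2 * ∑ a, p a * log (p a / q a) := by
  have hweight : ∑ a, (p a + 2 * q a) = 3 := by
    rw [sum_add_distrib, ← mul_sum, hp_sum, hq_sum]
    norm_num
  have hkl : ∑ a, q a * klFun (p a / q a) = ∑ a, p a * log (p a / q a) := by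
    simp only [mul_klFun_div _ (hq _).ne', sum_sub_distrib, sum_add_distrib, hp_sum, hq_sum]
    ring
  -- Cauchy–Schwarz with weights `p + 2q`, which sum to `3`
  have hcs := sq_sum_div_le_sum_sq_div univ (fun a ↦ |p a - q a|)
    (g := fun a ↦ p a + 2 * q a) fun a _ ↦ by linarith [hp a, hq a]
  simp only [hweight, sq_abs] at hcs
  calc (∑ a, |p a - q a|) ^ 2 ≤ 3 * ∑ a, (p a - q a) ^ 2 / (p a + 2 * q a) := by linarith
    _ ≤ 3 * ∑ a, 2 / 3 * (q a * klFun (p a / q a)) := by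
      gcongr with a
      exact sq_sub_div_le_mul_klFun_div (hp a) (hq a)
    _ = 2 * ∑ a, p a * log (p a / q a) := by rw [← mul_sum, hkl]; ring

lemma sum_mul_le_of_sum_eq_zero {ι : Type*} (s : Finset ι) {f d : ι → ℝ} {m M : ℝ}
    (hf : ∀ i ∈ s, f i ∈ Icc m M) (hd : ∑ i ∈ s, d i = 0) :
    ∑ i ∈ s, f i * d i ≤ (M - m) / 2 * ∑ i ∈ s, |d i| := by
  have hcenter : ∑ i ∈ s, f i * d i = ∑ i ∈ s, (f i - (m + M) / 2) * d i := by
    simp only [sub_mul, sum_sub_distrib, ← mul_sum, hd, mul_zero, sub_zero]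
  rw [hcenter, mul_sum]
  refine sum_le_sum fun i hi ↦ ?_
  have hfi : |f i - (m + M) / 2| ≤ (M - m) / 2 :=
    abs_le.2 ⟨by linarith [(hf i hi).1], by linarith [(hf i hi).2]⟩
  calc (f i - (m + M) / 2) * d i ≤ |f i - (m + M) / 2| * |d i| := by
        rw [← abs_mul]; exact le_abs_self _
    _ ≤ (M - m) / 2 * |d i| := by gcongr

theorem sum_mul_sub_le_mul_sqrt_kl {A : Type*} [Fintype A] {p q f : A → ℝ} {V : ℝ} (hV : 0 ≤ V)
    (hp : ∀ a, 0 ≤ p a) (hq : ∀ a, 0 < q a) (hp_sum : ∑ a, p a = 1) (hq_sum : ∑ a, q a = 1)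
    (hf : ∀ a, f a ∈ Icc 0 V) :
    ∑ a, f a * (p a - q a) ≤ V * √(1 / 2 * ∑ a, p a * log (p a / q a)) := by
  have hl1 : ∑ a, |p a - q a| ≤ √(2 * ∑ a, p a * log (p a / q a)) :=
    Real.le_sqrt_of_sq_le (sq_sum_abs_sub_le_two_mul_sum_mul_log hp hq hp_sum hq_sum)
  have hd : ∑ a, (p a - q a) = 0 := by rw [sum_sub_distrib, hp_sum, hq_sum, sub_self]
  calc ∑ a, f a * (p a - q a) ≤ V / 2 * ∑ a, |p a - q a| := by
        simpa using sum_mul_le_of_sum_eq_zero univ (fun a _ ↦ hf a) hd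
    _ ≤ V / 2 * √(2 * ∑ a, p a * log (p a / q a)) := by gcongr
    _ = V * √(1 / 2 * ∑ a, p a * log (p a / q a)) := by
      rw [show (2 : ℝ) * _ = 2 ^ 2 * (1 / 2 * ∑ a, p a * log (p a / q a)) by ring,
        sqrt_mul (by norm_num), sqrt_sq zero_le_two]
      ring

lemma integrable_sqrt_of_nonneg {Ω : Type*} [MeasurableSpace Ω] {μ : Measure Ω}
    [IsFiniteMeasure μ] {g : Ω → ℝ} (hg : ∀ x, 0 ≤ g x) (hg_int : Integrable g μ) :
    Integrable (fun x ↦ √(g x)) μ := by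
  refine ((integrable_const 1).add hg_int).mono'
    (continuous_sqrt.comp_aestronglyMeasurable hg_int.aestronglyMeasurable)
    (Filter.Eventually.of_forall fun x ↦ ?_)
  rw [Real.norm_of_nonneg (sqrt_nonneg _), Pi.add_apply, sqrt_le_left (by linarith [hg x])]
  nlinarith [hg x]

lemma integral_sqrt_le_sqrt_integral {Ω : Type*} [MeasurableSpace Ω] {μ : Measure Ω}
    [IsProbabilityMeasure μ] {g : Ω → ℝ} (hg : ∀ x, 0 ≤ g x) (hg_int : Integrable g μ) :
    ∫ x, √(g x) ∂μ ≤ √(∫ x, g x ∂μ) :=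
  strictConcaveOn_sqrt.concaveOn.le_map_integral continuous_sqrt.continuousOn isClosed_Ici
    (Filter.Eventually.of_forall hg) hg_int (integrable_sqrt_of_nonneg hg hg_int)

end

/-- Hölder + Pinsker + Jensen chain: for policies `π, π'` over a finite action set and
`f` with values in `[0, V]`,
`E_{s∼μ}[Σ_a f(s,a)(π'(a|s) − π(a|s))] ≤ V·sqrt((1/2)·E_{s∼μ}[KL(π'(·|s)‖π(·|s))])`. -/
theorem holder_pinsker_jensen {S A : Type*} [MeasurableSpace S] [Fintype A]
    (μ : Measure S) [IsProbabilityMeasure μ]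
    (π π' : S → A → ℝ) (f : S → A → ℝ) (V : ℝ) (hV : 0 ≤ V)
    (hπpos : ∀ s a, 0 < π s a) (hπsum : ∀ s, ∑ a, π s a = 1)
    (hπ'nonneg : ∀ s a, 0 ≤ π' s a) (hπ'sum : ∀ s, ∑ a, π' s a = 1)
    (hf : ∀ s a, f s a ∈ Set.Icc (0:ℝ) V)
    (hint1 : Integrable (fun s => ∑ a, f s a * (π' s a - π s a)) μ)
    (hint2 : Integrable (fun s => ∑ a, π' s a * Real.log (π' s a / π s a)) μ) :
    ∫ s, (∑ a, f s a * (π' s a - π s a)) ∂μ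
      ≤ V * Real.sqrt ((1 / 2) * ∫ s, (∑ a, π' s a * Real.log (π' s a / π s a)) ∂μ) := by
  set kl : S → ℝ := fun s ↦ 1 / 2 * ∑ a, π' s a * Real.log (π' s a / π s a)
  have hkl_nonneg : ∀ s, 0 ≤ kl s := fun s ↦ by
    simp only [kl]
    linarith [sq_nonneg (∑ a, |π' s a - π s a|),
      sq_sum_abs_sub_le_two_mul_sum_mul_log (hπ'nonneg s) (hπpos s) (hπ'sum s) (hπsum s)]
  have hkl_int : Integrable kl μ := hint2.const_mul _
  calc ∫ s, (∑ a, f s a * (π' s a - π s a)) ∂μ ≤ ∫ s, V * √(kl s) ∂μ :=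
        integral_mono hint1 ((integrable_sqrt_of_nonneg hkl_nonneg hkl_int).const_mul V) fun s ↦
          sum_mul_sub_le_mul_sqrt_kl hV (hπ'nonneg s) (hπpos s) (hπ'sum s) (hπsum s) (hf s)
    _ = V * ∫ s, √(kl s) ∂μ := integral_const_mul V _
    _ ≤ V * √(∫ s, kl s ∂μ) := by gcongr; exact integral_sqrt_le_sqrt_integral hkl_nonneg hkl_int
    _ = V * √(1 / 2 * ∫ s, ∑ a, π' s a * Real.log (π' s a / π s a) ∂μ) := by
      rw [integral_const_mul]
end

section
/- Let f₁, ..., f_K : 𝒜 → [0, V] be bounded measurable functions on a measure space (𝒜, ν) with ν(𝒜) < ∞, let π₁ be a probability density w.r.t. ν, and define iteratively π_{k+1}(a) ∝ π_k(a)·exp(η·f_k(a)). Then for any probability density q w.r.t. ν with KL(q‖π₁) < ∞: Σ_{k=1}^K ( E_{a∼q}[f_k(a)] − E_{a∼π_k}[f_k(a)] ) ≤ η·V²·K/8 + (1/η)·KL(q‖π₁). In particular with η = sqrt(8·KL(q‖π₁)/(K·V²)), the average regret is at most V·sqrt(KL(q‖π₁)/(2K)). -/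
/-!
The potential `Φ k = log ∫ exp (η ∑_{j<k} f_j) dπ₁` is the cumulant generating function of the
cumulative payoff under the prior, and its increment `Φ (k+1) - Φ k` is the cumulant generating
function of `f_k` under the `k`-th exponential-weights distribution, i.e. the prior tilted by
`η ∑_{j<k} f_j`. Hoeffding's lemma bounds that increment by `η E_{π_k}[f_k] + η² V² / 8`.
On the other side, Gibbs' variational principle gives
`η E_q[∑_{j<K} f_j] - KL(q‖π₁) ≤ Φ K`. Comparing the two bounds on `Φ K` and dividing by `η`
gives the regret bound; the second claim is the value of that bound at the minimizing `η`.
-/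

open MeasureTheory Finset
open Real Set ProbabilityTheory

lemma sum_range_mem_Icc {x : ℕ → ℝ} {a b : ℝ} (hx : ∀ k, x k ∈ Icc a b) (n : ℕ) :
    ∑ j ∈ range n, x j ∈ Icc (n * a) (n * b) := by
  constructor
  · simpa using card_nsmul_le_sum (range n) x a fun j _ ↦ (hx j).1
  · simpa using sum_le_card_nsmul (range n) x b fun j _ ↦ (hx j).2

namespace ProbabilityTheory

variable {Ω : Type*} {mΩ : MeasurableSpace Ω} {μ : Measure Ω}

lemma cgf_le_mul_integral_add_of_mem_Icc [IsProbabilityMeasure μ] {X : Ω → ℝ} {a b : ℝ}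
    (hm : AEMeasurable X μ) (hb : ∀ᵐ ω ∂μ, X ω ∈ Icc a b) (t : ℝ) :
    cgf X μ t ≤ t * μ[X] + (b - a) ^ 2 * t ^ 2 / 8 := by
  have hoeffding := (hasSubgaussianMGF_of_mem_Icc hm hb).cgf_le t
  have hshift : cgf (fun ω ↦ X ω - μ[X]) μ t = cgf X μ t - t * μ[X] := by
    have hpos := mgf_pos (integrable_exp_mul_of_mem_Icc (t := t) hm hb)
    simp_rw [cgf, sub_eq_add_neg, mgf_add_const, log_mul hpos.ne' (exp_pos _).ne', log_exp]
    ring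
  have hvar : (((‖b - a‖₊ / 2) ^ 2 : NNReal) : ℝ) = (b - a) ^ 2 / 4 := by
    simp [div_pow, sq_abs]
    ring
  rw [hshift, hvar] at hoeffding
  linarith

lemma cgf_add_eq_cgf_add_cgf_tilted [NeZero μ] {X Y : Ω → ℝ} {t : ℝ}
    (hX : Integrable (fun ω ↦ exp (t * X ω)) μ)
    (hXY : Integrable (fun ω ↦ exp (t * (X ω + Y ω))) μ) :
    cgf (fun ω ↦ X ω + Y ω) μ t = cgf X μ t + cgf Y (μ.tilted (t * X ·)) t := by
  have hmgf : mgf Y (μ.tilted (t * X ·)) t = mgf (fun ω ↦ X ω + Y ω) μ t / mgf X μ t := by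
    simp_rw [mgf, integral_exp_tilted, Pi.add_apply, mul_add]
  rw [cgf, cgf, cgf, hmgf, log_div (mgf_pos' (NeZero.ne μ) hXY).ne' (mgf_pos' (NeZero.ne μ) hX).ne']
  ring

lemma cgf_sum_range_le [IsProbabilityMeasure μ] {X : ℕ → Ω → ℝ} {a b : ℝ}
    (hm : ∀ k, Measurable (X k)) (hb : ∀ k ω, X k ω ∈ Icc a b) (t : ℝ) (n : ℕ) :
    cgf (fun ω ↦ ∑ j ∈ range n, X j ω) μ t
      ≤ ∑ k ∈ range n, t * ∫ ω, X k ω ∂μ.tilted (fun ω ↦ t * ∑ j ∈ range k, X j ω)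
        + n * ((b - a) ^ 2 * t ^ 2 / 8) := by
  have hint (k : ℕ) (s : ℝ) : Integrable (fun ω ↦ exp (s * ∑ j ∈ range k, X j ω)) μ :=
    integrable_exp_mul_of_mem_Icc (by fun_prop) (ae_of_all _ fun ω ↦ sum_range_mem_Icc (hb · ω) k)
  induction n with
  | zero => simp [cgf_const]
  | succ n ih =>
    have := isProbabilityMeasure_tilted (hint n t)
    have hstep := cgf_add_eq_cgf_add_cgf_tilted (Y := X n) (hint n t)
      (by simpa only [← sum_range_succ] using hint (n + 1) t)
    have hhoeffding := cgf_le_mul_integral_add_of_mem_Icc (μ := μ.tilted (t * ∑ j ∈ range n, X j ·))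
      (hm n).aemeasurable (ae_of_all _ (hb n)) t
    simp only [← sum_range_succ] at hstep
    rw [hstep, sum_range_succ]
    push_cast
    linarith

end ProbabilityTheory

lemma Real.sub_le_mul_log_div {p q : ℝ} (hq : 0 ≤ q) (hp : 0 ≤ p) (hpq : p = 0 → q = 0) :
    q - p ≤ q * log (q / p) := by
  rcases hq.eq_or_lt with rfl | hq
  · simpa using hp
  have hp : 0 < p := hp.lt_of_ne fun h ↦ hq.ne' (hpq h.symm)
  have := mul_le_mul_of_nonneg_left (log_le_sub_one_of_pos (div_pos hp hq)) hq.le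
  rw [log_div hq.ne' hp.ne']
  rw [log_div hp.ne' hq.ne', mul_sub_one, mul_div_cancel₀ _ hq.ne'] at this
  linarith

section Density

variable {α : Type*} {mα : MeasurableSpace α} {ν : Measure α}

lemma MeasureTheory.Integrable.mul_of_mem_Icc {w g : α → ℝ} {b c : ℝ} (hw : Integrable w ν)
    (hg : AEStronglyMeasurable g ν) (hgb : ∀ a, g a ∈ Icc b c) :
    Integrable (fun a ↦ w a * g a) ν :=
  hw.mul_bdd hg (c := max |b| |c|) (ae_of_all _ fun a ↦ abs_le_max_abs_abs (hgb a).1 (hgb a).2)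

lemma integral_sub_le_integral_mul_log_div {p q : α → ℝ} (hq : 0 ≤ q) (hp : 0 ≤ p)
    (hac : ∀ᵐ a ∂ν, p a = 0 → q a = 0) (hqint : Integrable q ν) (hpint : Integrable p ν)
    (hint : Integrable (fun a ↦ q a * log (q a / p a)) ν) :
    ∫ a, q a ∂ν - ∫ a, p a ∂ν ≤ ∫ a, q a * log (q a / p a) ∂ν := by
  rw [← integral_sub hqint hpint]
  exact integral_mono_ae (hqint.sub hpint) hint
    (hac.mono fun a ha ↦ sub_le_mul_log_div (hq a) (hp a) ha)

/-- Gibbs' variational principle: apply `integral_sub_le_integral_mul_log_div` to the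
probability density `p e^h / ∫ p e^h`. -/
lemma integral_mul_sub_le_log_integral_mul_exp {p q h : α → ℝ} (hq : 0 ≤ q) (hp : 0 ≤ p)
    (hqint : Integrable q ν) (hqprob : ∫ a, q a ∂ν = 1) (hac : ∀ᵐ a ∂ν, p a = 0 → q a = 0)
    (hKLint : Integrable (fun a ↦ q a * log (q a / p a)) ν)
    (hqh : Integrable (fun a ↦ q a * h a) ν) (hph : Integrable (fun a ↦ p a * exp (h a)) ν)
    (hZ : 0 < ∫ a, p a * exp (h a) ∂ν) :
    ∫ a, q a * h a ∂ν - ∫ a, q a * log (q a / p a) ∂ν ≤ log (∫ a, p a * exp (h a) ∂ν) := by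
  set Z := ∫ a, p a * exp (h a) ∂ν
  have hlog : (fun a ↦ q a * log (q a / (p a * exp (h a) / Z))) =ᵐ[ν]
      fun a ↦ q a * log (q a / p a) - q a * h a + q a * log Z := by
    filter_upwards [hac] with a ha
    rcases (hq a).eq_or_lt with hqa | hqa
    · simp [← hqa]
    have hpa : 0 < p a := (hp a).lt_of_ne fun h ↦ hqa.ne' (ha h.symm)
    have hsplit : q a / (p a * exp (h a) / Z) = q a / p a * (Z * exp (-h a)) := by
      rw [exp_neg]
      field_simp
    rw [hsplit, log_mul (div_pos hqa hpa).ne' (by positivity), log_mul hZ.ne' (exp_pos _).ne', log_exp]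
    ring
  have hKLh : Integrable (fun a ↦ q a * log (q a / p a) - q a * h a) ν := hKLint.sub hqh
  have hgibbs := integral_sub_le_integral_mul_log_div (p := fun a ↦ p a * exp (h a) / Z)
    hq (fun a ↦ div_nonneg (mul_nonneg (hp a) (exp_pos _).le) hZ.le)
    (hac.mono fun a ha h0 ↦ ha (by simpa [hZ.ne', (exp_pos _).ne'] using h0))
    hqint (hph.div_const Z) ((hKLh.add (hqint.mul_const _)).congr hlog.symm)
  rw [integral_congr_ae hlog, integral_add hKLh (hqint.mul_const _),
    integral_sub hKLint hqh, integral_div, integral_mul_const, hqprob, div_self hZ.ne'] at hgibbs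
  linarith

lemma integral_withDensity_ofReal {ρ : α → ℝ} (hρm : Measurable ρ) (hρ : 0 ≤ ρ) (g : α → ℝ) :
    ∫ a, g a ∂ν.withDensity (fun a ↦ ENNReal.ofReal (ρ a)) = ∫ a, ρ a * g a ∂ν := by
  rw [integral_withDensity_eq_integral_toReal_smul (by fun_prop) (ae_of_all _ fun _ ↦ ENNReal.ofReal_lt_top)]
  simp [ENNReal.toReal_ofReal (hρ _)]

lemma isProbabilityMeasure_withDensity_ofReal {ρ : α → ℝ} (hρ : 0 ≤ ρ) (hρint : Integrable ρ ν)
    (hρprob : ∫ a, ρ a ∂ν = 1) :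
    IsProbabilityMeasure (ν.withDensity fun a ↦ ENNReal.ofReal (ρ a)) := by
  constructor
  rw [withDensity_apply _ MeasurableSet.univ, Measure.restrict_univ,
    ← ofReal_integral_eq_lintegral_ofReal hρint (ae_of_all _ hρ), hρprob, ENNReal.ofReal_one]

lemma integral_tilted_withDensity_ofReal {ρ : α → ℝ} (hρm : Measurable ρ) (hρ : 0 ≤ ρ)
    (h g : α → ℝ) :
    ∫ a, g a ∂(ν.withDensity fun a ↦ ENNReal.ofReal (ρ a)).tilted h
      = (∫ a, g a * (ρ a * exp (h a)) ∂ν) / ∫ a, ρ a * exp (h a) ∂ν := by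
  simp_rw [integral_tilted, integral_withDensity_ofReal hρm hρ, ← integral_div, smul_eq_mul]
  congr 1 with a
  ring

lemma exp_weights_regret_le {V : ℝ} {f : ℕ → α → ℝ} (hfm : ∀ k, Measurable (f k))
    (hfb : ∀ k a, f k a ∈ Icc 0 V) {p q : α → ℝ} (hpm : Measurable p) (hp : 0 ≤ p) (hq : 0 ≤ q)
    (hpint : Integrable p ν) (hqint : Integrable q ν) (hpprob : ∫ a, p a ∂ν = 1)
    (hqprob : ∫ a, q a ∂ν = 1) (hac : ∀ᵐ a ∂ν, p a = 0 → q a = 0)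
    (hKLint : Integrable (fun a ↦ q a * log (q a / p a)) ν) {η : ℝ} (hη : 0 < η) (K : ℕ) :
    ∑ k ∈ range K, ((∫ a, f k a * q a ∂ν)
        - (∫ a, f k a * (p a * exp (η * ∑ j ∈ range k, f j a)) ∂ν)
          / (∫ a, p a * exp (η * ∑ j ∈ range k, f j a) ∂ν))
      ≤ η * V ^ 2 * K / 8 + (1 / η) * ∫ a, q a * log (q a / p a) ∂ν := by
  set μ := ν.withDensity fun a ↦ ENNReal.ofReal (p a)
  have := isProbabilityMeasure_withDensity_ofReal hp hpint hpprob
  set S : α → ℝ := fun a ↦ ∑ j ∈ range K, f j a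
  have hSb : ∀ a, S a ∈ Icc 0 (K * V) := fun a ↦ by simpa using sum_range_mem_Icc (hfb · a) K
  have hcgf : cgf S μ η = log (∫ a, p a * exp (η * S a) ∂ν) := by
    rw [cgf, mgf, integral_withDensity_ofReal hpm hp]
  have hZ : 0 < ∫ a, p a * exp (η * S a) ∂ν := by
    rw [← integral_withDensity_ofReal hpm hp]
    exact integral_exp_pos (integrable_exp_mul_of_mem_Icc (by fun_prop) (ae_of_all _ hSb))
  have hpS : Integrable (fun a ↦ p a * exp (η * S a)) ν :=
    hpint.mul_of_mem_Icc (by fun_prop) fun a ↦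
      ⟨(exp_pos _).le, exp_le_exp.mpr (mul_le_mul_of_nonneg_left (hSb a).2 hη.le)⟩
  have hqS : Integrable (fun a ↦ q a * (η * S a)) ν :=
    hqint.mul_of_mem_Icc (by fun_prop) fun a ↦
      ⟨mul_nonneg hη.le (hSb a).1, mul_le_mul_of_nonneg_left (hSb a).2 hη.le⟩
  have hpotential := cgf_sum_range_le (μ := μ) hfm hfb η K
  have hgibbs := integral_mul_sub_le_log_integral_mul_exp (h := fun a ↦ η * S a) hq hp hqint
    hqprob hac hKLint hqS hpS hZ
  have hcomparator : ∑ k ∈ range K, ∫ a, f k a * q a ∂ν = ∫ a, q a * S a ∂ν := by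
    rw [← integral_finsetSum _ fun k _ ↦ (hqint.mul_of_mem_Icc (hfm k).aestronglyMeasurable
      (hfb k)).congr (ae_of_all _ fun _ ↦ mul_comm _ _)]
    simp_rw [S, Finset.mul_sum, mul_comm (q _)]
  -- the `k`-th subtracted term is the mean of `f k` under the prior tilted by `η ∑ j < k, f j`
  simp_rw [← integral_tilted_withDensity_ofReal hpm hp]
  rw [sum_sub_distrib, hcomparator]
  rw [hcgf, ← mul_sum] at hpotential
  simp_rw [mul_left_comm (q _), integral_const_mul] at hgibbs
  rw [← mul_le_mul_iff_right₀ hη, mul_sub, mul_add, ← mul_assoc η (1 / η),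
    mul_one_div_cancel hη.ne', one_mul]
  linarith

end Density

lemma add_div_eq_at_tuned_rate {V K KL : ℝ} (hV : 0 < V) (hK : 0 < K) (hKL : 0 < KL) :
    √(8 * KL / (K * V ^ 2)) * V ^ 2 * K / 8 + 1 / √(8 * KL / (K * V ^ 2)) * KL
      = K * (V * √(KL / (2 * K))) := by
  set s := √(KL / (2 * K))
  have hs : 0 < s := by positivity
  have hs2 : s ^ 2 = KL / (2 * K) := sq_sqrt (by positivity)
  have hη : √(8 * KL / (K * V ^ 2)) = 4 * s / V := by
    rw [← sqrt_sq (by positivity : 0 ≤ 4 * s / V), div_pow, mul_pow, hs2]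
    congr 1
    field_simp
    ring
  rw [hη]
  field_simp
  rw [show KL = 2 * K * s ^ 2 by rw [hs2]; field_simp]
  ring

theorem exp_weights_regret_general
    {α : Type*} [MeasurableSpace α] (ν : Measure α)
    (K : ℕ) (V : ℝ) (hV : 0 < V)
    (f : ℕ → α → ℝ) (hfm : ∀ k, Measurable (f k))
    (hfb : ∀ k a, f k a ∈ Set.Icc (0:ℝ) V)
    (π₁ q : α → ℝ) (hπ₁m : Measurable π₁)
    (hπ₁0 : ∀ a, 0 ≤ π₁ a) (hq0 : ∀ a, 0 ≤ q a)
    (hπ₁int : Integrable π₁ ν) (hqint : Integrable q ν)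
    (hπ₁prob : ∫ a, π₁ a ∂ν = 1) (hqprob : ∫ a, q a ∂ν = 1)
    (hac : ∀ᵐ a ∂ν, π₁ a = 0 → q a = 0)
    (hKLint : Integrable (fun a => q a * Real.log (q a / π₁ a)) ν)
    (KL : ℝ) (hKL : KL = ∫ a, q a * Real.log (q a / π₁ a) ∂ν) :
    (∀ η : ℝ, 0 < η →
      ∑ k ∈ Finset.range K,
        ((∫ a, f k a * q a ∂ν)
          - (∫ a, f k a * (π₁ a * Real.exp (η * ∑ j ∈ Finset.range k, f j a)) ∂ν)
              / (∫ a, π₁ a * Real.exp (η * ∑ j ∈ Finset.range k, f j a) ∂ν))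
        ≤ η * V ^ 2 * K / 8 + (1 / η) * KL) ∧
    (0 < K → 0 < KL →
      (1 / (K : ℝ)) * ∑ k ∈ Finset.range K,
        ((∫ a, f k a * q a ∂ν)
          - (∫ a, f k a * (π₁ a *
                Real.exp (Real.sqrt (8 * KL / (K * V ^ 2)) * ∑ j ∈ Finset.range k, f j a)) ∂ν)
              / (∫ a, π₁ a *
                Real.exp (Real.sqrt (8 * KL / (K * V ^ 2)) * ∑ j ∈ Finset.range k, f j a) ∂ν))
        ≤ V * Real.sqrt (KL / (2 * K))) := by
  subst hKL
  have regret {η : ℝ} (hη : 0 < η) := exp_weights_regret_le hfm hfb hπ₁m hπ₁0 hq0 hπ₁int hqint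
    hπ₁prob hqprob hac hKLint hη K
  refine ⟨fun η hη ↦ regret hη, fun hK hKL ↦ ?_⟩
  have hK : 0 < (K : ℝ) := Nat.cast_pos.mpr hK
  rw [← mul_le_mul_iff_right₀ hK, ← mul_assoc, mul_one_div_cancel hK.ne', one_mul,
    ← add_div_eq_at_tuned_rate hV hK hKL]
  exact regret (by positivity)

/-- Continuous exponential-weights (entropic mirror descent) regret bound over a
general action space: with `π_{k+1} ∝ π_k · exp(η f_k)`, for any comparator density
`q` with finite `KL(q‖π₁)`,
`Σ_k (E_q[f_k] − E_{π_k}[f_k]) ≤ ηV²K/8 + KL(q‖π₁)/η`; in particular, with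
`η = sqrt(8 KL/(K V²))`, the average regret is at most `V·sqrt(KL/(2K))`. -/
theorem exp_weights_regret
    {α : Type*} [MeasurableSpace α] (ν : Measure α) [IsFiniteMeasure ν]
    (K : ℕ) (V : ℝ) (hV : 0 < V)
    (f : ℕ → α → ℝ) (hfm : ∀ k, Measurable (f k))
    (hfb : ∀ k a, f k a ∈ Set.Icc (0:ℝ) V)
    (π₁ q : α → ℝ) (hπ₁m : Measurable π₁) (hqm : Measurable q)
    (hπ₁0 : ∀ a, 0 ≤ π₁ a) (hq0 : ∀ a, 0 ≤ q a)
    (hπ₁int : Integrable π₁ ν) (hqint : Integrable q ν)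
    (hπ₁prob : ∫ a, π₁ a ∂ν = 1) (hqprob : ∫ a, q a ∂ν = 1)
    (hac : ∀ᵐ a ∂ν, π₁ a = 0 → q a = 0)
    (hKLint : Integrable (fun a => q a * Real.log (q a / π₁ a)) ν)
    (KL : ℝ) (hKL : KL = ∫ a, q a * Real.log (q a / π₁ a) ∂ν) :
    (∀ η : ℝ, 0 < η →
      ∑ k ∈ Finset.range K,
        ((∫ a, f k a * q a ∂ν)
          - (∫ a, f k a * (π₁ a * Real.exp (η * ∑ j ∈ Finset.range k, f j a)) ∂ν)
              / (∫ a, π₁ a * Real.exp (η * ∑ j ∈ Finset.range k, f j a) ∂ν))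
        ≤ η * V ^ 2 * K / 8 + (1 / η) * KL) ∧
    (0 < K → 0 < KL →
      (1 / (K : ℝ)) * ∑ k ∈ Finset.range K,
        ((∫ a, f k a * q a ∂ν)
          - (∫ a, f k a * (π₁ a *
                Real.exp (Real.sqrt (8 * KL / (K * V ^ 2)) * ∑ j ∈ Finset.range k, f j a)) ∂ν)
              / (∫ a, π₁ a *
                Real.exp (Real.sqrt (8 * KL / (K * V ^ 2)) * ∑ j ∈ Finset.range k, f j a) ∂ν))
        ≤ V * Real.sqrt (KL / (2 * K))) :=
  exp_weights_regret_general ν K V hV f hfm hfb π₁ q hπ₁m hπ₁0 hq0 hπ₁int hqint hπ₁prob hqprob hac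
    hKLint KL hKL
end
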